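/- arXiv:math/0312448 — 2 statements merged into one kernel-verified Lean document; each statement's English description precedes it below -/
import Mathlib

section
/- For every natural number n, the binomial sum ∑_{k=0}^{n} C(4n+1, 2n−2k)·C(n+k, k) equals 4^n · C(3n, n), where C(a, b) denotes the binomial coefficient a choose b. -/
def bb (s : ℕ) (t : ℤ) : ℕ := if 0 ≤ t then s.choose t.toNat else 0

lemma bb_neg {s : ℕ} {t : ℤ} (h : t < 0) : bb s t = 0 := by
  simp [bb, not_le.mpr h]

lemma bb_coe (s m : ℕ) : bb s (m : ℤ) = s.choose m := by
  simp [bb]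

lemma bb_pascal (s : ℕ) (t : ℤ) : bb (s+1) t = bb s t + bb s (t-1) := by
  rcases lt_trichotomy t 0 with h | h | h
  · rw [bb_neg h, bb_neg h, bb_neg (by omega)]
  · subst h
    simp [bb]
  · obtain ⟨u, rfl⟩ := Int.eq_ofNat_of_zero_le h.le
    obtain ⟨v, rfl⟩ : ∃ v, u = v + 1 := by
      rcases u with _ | v
      · simp at h
      · exact ⟨v, rfl⟩
    rw [bb_coe, show ((v+1:ℕ):ℤ) - 1 = ((v:ℕ):ℤ) by push_cast; ring, bb_coe, bb_coe,
      Nat.choose_succ_succ, Nat.succ_eq_add_one, Nat.add_comm]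

def FF (a r m : ℕ) : ℕ :=
  ∑ k ∈ Finset.range (m+1), (a+k).choose k * bb (a+1+r) ((m:ℤ) - 2*k)

def GG (a r m : ℕ) : ℕ :=
  ∑ j ∈ Finset.range (m+1), r.choose j * (a+m-j).choose (m-j)

lemma GG_zero (a r : ℕ) : GG a r 0 = 1 := by simp [GG]

lemma FF_zero (a r : ℕ) : FF a r 0 = 1 := by simp [FF, bb]

lemma GG_r0 (a m : ℕ) : GG a 0 m = (a+m).choose m := by
  rw [GG, Finset.sum_eq_single_of_mem 0 (by simp)]
  · simp
  · intro j _ hj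
    simp [Nat.choose_eq_zero_of_lt (Nat.pos_of_ne_zero hj)]

lemma GG_r1 (a m : ℕ) : GG a 1 (m+1) = (a+m+1).choose (m+1) + (a+m).choose m := by
  rw [GG, Finset.sum_range_succ', Finset.sum_range_succ']
  have h1 : ∀ j ∈ Finset.range m, Nat.choose 1 (j+1+1) * (a+(m+1)-(j+1+1)).choose ((m+1)-(j+1+1)) = 0 := by
    intro j _
    simp [Nat.choose_eq_zero_of_lt]
  rw [Finset.sum_eq_zero h1]
  have e1 : a + (m+1) - (0+1) = a + m := by omega
  have e2 : a + (m+1) - 0 = a + m + 1 := by omega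
  simp [e1, e2, Nat.add_comm]

lemma FF_succ_r (a s m : ℕ) : FF a (s+1) (m+1) = FF a s (m+1) + FF a s m := by
  have : ∀ k : ℕ, bb (a+1+(s+1)) ((m+1:ℕ) - 2*(k:ℤ))
      = bb (a+1+s) ((m+1:ℕ) - 2*k) + bb (a+1+s) ((m:ℕ) - 2*k) := by
    intro k
    rw [show a+1+(s+1) = (a+1+s)+1 from rfl, bb_pascal]
    congr 2
    push_cast; ring
  simp only [FF, this, Nat.mul_add, Finset.sum_add_distrib]
  congr 1
  rw [Finset.sum_range_succ (n := m+1)]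
  rw [bb_neg (by push_cast; omega), Nat.mul_zero, Nat.add_zero]

lemma GG_succ_r (a s m : ℕ) : GG a (s+1) (m+1) = GG a s (m+1) + GG a s m := by
  have peel : ∀ r : ℕ, GG a r (m+1) = (∑ j ∈ Finset.range (m+1),
      r.choose (j+1) * (a+m-j).choose (m-j)) + r.choose 0 * (a+m+1).choose (m+1) := by
    intro r
    rw [GG, Finset.sum_range_succ']
    simp only [← Nat.add_assoc, Nat.add_sub_add_right, Nat.sub_zero]
  rw [peel, peel]
  simp only [Nat.choose_succ_succ, Nat.add_mul, Finset.sum_add_distrib, Nat.choose_zero_right,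
    one_mul, GG]
  ring

lemma FF_succ_a (a m : ℕ) : FF (a+1) 0 (m+2) = FF a 1 (m+2) + FF (a+1) 0 m := by
  have pas : ∀ k : ℕ, (a+1+(k+1)).choose (k+1)
      = (a+(k+1)).choose (k+1) + (a+1+k).choose k := by
    intro k
    rw [show a+1+(k+1) = (a+(k+1))+1 by omega, Nat.choose_succ_succ]
    rw [show a+(k+1) = a+1+k by omega]
    simp [Nat.succ_eq_add_one, Nat.add_comm]
  have ext : (∑ k ∈ Finset.range (m+2),
      (a+1+k).choose k * bb (a+1+1) (((m+2:ℕ):ℤ) - 2*(((k+1:ℕ)):ℤ))) = FF (a+1) 0 m := by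
    rw [FF]
    simp only [Nat.add_zero]
    rw [Finset.sum_range_succ, bb_neg (show ((m+2:ℕ):ℤ) - 2*(((m+1+1:ℕ)):ℤ) < 0 by push_cast; omega),
      Nat.mul_zero, Nat.add_zero]
    apply Finset.sum_congr rfl
    intro k hk
    congr 1
    push_cast; ring
  rw [← ext, FF, FF]
  simp only [Nat.add_zero]
  rw [Finset.sum_range_succ' (fun k => (a+1+k).choose k * bb (a+1+1) (((m+2:ℕ):ℤ) - 2*(k:ℤ))) (m+2),
    Finset.sum_range_succ' (fun k => (a+k).choose k * bb (a+1+1) (((m+2:ℕ):ℤ) - 2*(k:ℤ))) (m+2)]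
  simp only [pas, Nat.add_mul, Finset.sum_add_distrib, Nat.add_zero, Nat.choose_zero_right, one_mul]
  ring

lemma FF_00 (m : ℕ) : FF 0 0 m = 1 := by
  rw [FF, Finset.sum_eq_single_of_mem (m/2) (Finset.mem_range.mpr (by omega))]
  · simp only [Nat.zero_add, Nat.choose_self, one_mul]
    have h : ((m:ℕ):ℤ) - 2*((m/2 : ℕ):ℤ) = ((m % 2 : ℕ):ℤ) := by push_cast; omega
    rw [h, bb_coe]
    rcases Nat.mod_two_eq_zero_or_one m with h2|h2 <;> simp [h2]
  · intro k hk hne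
    have hk' := Finset.mem_range.mp hk
    rcases lt_or_ge ((m:ℤ) - 2*k) 0 with h|h
    · rw [bb_neg h, Nat.mul_zero]
    · have h2 : 2 ≤ (m:ℤ) - 2*(k:ℤ) := by omega
      have : Nat.choose (0+1+0) ((m:ℤ)-2*(k:ℤ)).toNat = 0 :=
        Nat.choose_eq_zero_of_lt (by omega)
      simp [bb, h, this]

lemma FF_r0_one (a : ℕ) : FF a 0 1 = a + 1 := by
  rw [FF]
  norm_num [Finset.sum_range_succ, bb]

lemma key : ∀ N a r m, 2*a + r + m ≤ N → FF a r m = GG a r m := by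
  intro N
  induction N with
  | zero =>
    intro a r m h
    obtain rfl : a = 0 := by omega
    obtain rfl : r = 0 := by omega
    obtain rfl : m = 0 := by omega
    rw [FF_zero, GG_zero]
  | succ N ih =>
    intro a r m h
    rcases r with _ | s
    · rcases a with _ | a'
      · rw [FF_00, GG_r0]
        simp
      · rcases m with _ | m
        · rw [FF_zero, GG_zero]
        · rcases m with _ | m
          · rw [FF_r0_one, GG_r0, Nat.choose_one_right]
          · rw [FF_succ_a, ih a' 1 (m+2) (by omega), ih (a'+1) 0 m (by omega),
              GG_r1 a' (m+1), GG_r0, GG_r0]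
            simp only [show m+1+1 = m+2 from rfl, show a'+m+1+1 = a'+m+2 from rfl,
              show a'+1+(m+2) = a'+m+3 from by omega,
              show a'+(m+1)+1 = a'+m+2 from by omega,
              show a'+(m+1) = a'+m+1 from by omega,
              show a'+1+m = a'+m+1 from by omega]
            have e1 : (a'+m+3).choose (m+2) = (a'+m+2).choose (m+1) + (a'+m+2).choose (m+2) :=
              Nat.choose_succ_succ _ _
            have e2 : (a'+m+2).choose (m+1) = (a'+m+1).choose m + (a'+m+1).choose (m+1) :=
              Nat.choose_succ_succ _ _
            omega
    · rcases m with _ | m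
      · rw [FF_zero, GG_zero]
      · rw [FF_succ_r, GG_succ_r, ih a s (m+1) (by omega), ih a s m (by omega)]

/-- `∑_{k=0}^{n} C(4n+1, 2n−2k)·C(n+k, k) = 4^n · C(3n, n)`. -/
theorem binomial_sum_eq_four_pow_mul_choose (n : ℕ) :
    ∑ k ∈ Finset.range (n + 1),
      Nat.choose (4 * n + 1) (2 * n - 2 * k) * Nat.choose (n + k) k =
    4 ^ n * Nat.choose (3 * n) n := by
  have h1 : FF n (3*n) (2*n) = ∑ k ∈ Finset.range (n + 1),
      Nat.choose (4 * n + 1) (2 * n - 2 * k) * Nat.choose (n + k) k := by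
    rw [FF]
    have hz : ∀ k ∈ Finset.range (2*n+1), k ∉ Finset.range (n+1) →
        (n+k).choose k * bb (n+1+3*n) (((2*n:ℕ):ℤ) - 2*(k:ℤ)) = 0 := by
      intro k hk hk'
      have h2 : n + 1 ≤ k := by
        by_contra hc
        exact hk' (Finset.mem_range.mpr (by omega))
      rw [bb_neg (by push_cast; omega), Nat.mul_zero]
    rw [← Finset.sum_subset (Finset.range_subset_range.mpr (show n+1 ≤ 2*n+1 by omega)) hz]
    apply Finset.sum_congr rfl
    intro k hk
    have hk' := Finset.mem_range.mp hk
    rw [show ((2*n:ℕ):ℤ) - 2*(k:ℤ) = ((2*n-2*k : ℕ):ℤ) from by omega, bb_coe,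
      show n+1+3*n = 4*n+1 from by ring, Nat.mul_comm]
  have h2 : GG n (3*n) (2*n) = 4 ^ n * Nat.choose (3 * n) n := by
    rw [GG]
    have term : ∀ j ∈ Finset.range (2*n+1),
        (3*n).choose j * (n+2*n-j).choose (2*n-j) = (3*n).choose n * (2*n).choose j := by
      intro j hj
      have hjr := Finset.mem_range.mp hj
      have e0 : n + 2*n - j = 3*n - j := by omega
      have e1 : (3*n-j).choose (2*n-j) = (3*n-j).choose n := by
        rw [show 2*n-j = (3*n-j) - n from by omega]
        exact Nat.choose_symm (by omega)
      have e2 : (3*n).choose j = (3*n).choose (3*n-j) := (Nat.choose_symm (by omega)).symm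
      rw [e0, e1, e2, Nat.choose_mul (by omega),
        show 3*n - n = 2*n from by omega, show 3*n - j - n = 2*n - j from by omega,
        Nat.choose_symm (by omega)]
    rw [Finset.sum_congr rfl term, ← Finset.mul_sum, Nat.sum_range_choose,
      show (2:ℕ)^(2*n) = 4^n from by rw [Nat.pow_mul], Nat.mul_comm]
  rw [← h1, key (2*n + 3*n + 2*n) n (3*n) (2*n) le_rfl, h2]
end

section
/- Define a(1) = 1 and, for integers n > 1, a(n) = (1/n) · ∑_{k=0}^{n−2} C(2n−k−2, n−1)·C(n−2, k). Then a(2) = 1 and for every integer n > 1 the recurrence (n+1)·a(n+1) = 3·(2n−1)·a(n) − (n−2)·a(n−1) holds. -/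
private def Tq (j k : ℕ) : ℚ := ((2*j+2-k).choose (j+1) : ℚ) * ((j).choose k : ℚ)

private def Psi (j k : ℕ) : ℚ :=
  (k : ℚ) * (-(2*(j:ℚ)+5)*(k:ℚ)^2 + (8*(j:ℚ)^2+38*(j:ℚ)+45)*(k:ℚ)
      - ((j:ℚ)+2)*(7*(j:ℚ)^2+36*(j:ℚ)+47))
    * ((2*j+3-k).choose j : ℚ) * ((j+2).choose k : ℚ) / (((j:ℚ)+1)*((j:ℚ)+2))

private lemma chq (m r : ℕ) : (((m+r).choose m) : ℚ) = ((m+r).factorial : ℚ) / ((m.factorial : ℚ) * (r.factorial : ℚ)) := by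
  rw [Nat.cast_choose ℚ (Nat.le_add_right m r), Nat.add_sub_cancel_left]

private lemma fq1 (m : ℕ) : ((m+1).factorial : ℚ) = ((m:ℚ)+1) * (m.factorial : ℚ) := by
  rw [Nat.factorial_succ]; push_cast; ring

private lemma fq2 (m : ℕ) : ((m+2).factorial : ℚ) = ((m:ℚ)+2)*((m:ℚ)+1) * (m.factorial : ℚ) := by
  rw [show m+2 = (m+1)+1 from rfl, fq1, fq1]; push_cast; ring

private lemma fq3 (m : ℕ) : ((m+3).factorial : ℚ) = ((m:ℚ)+3)*((m:ℚ)+2)*((m:ℚ)+1) * (m.factorial : ℚ) := by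
  rw [show m+3 = (m+2)+1 from rfl, fq1, fq2]; push_cast; ring

private lemma fq4 (m : ℕ) : ((m+4).factorial : ℚ) = ((m:ℚ)+4)*((m:ℚ)+3)*((m:ℚ)+2)*((m:ℚ)+1) * (m.factorial : ℚ) := by
  rw [show m+4 = (m+3)+1 from rfl, fq1, fq3]; push_cast; ring

set_option maxHeartbeats 2000000 in
private lemma key_s3 (j k : ℕ) :
    ((j:ℚ)+2)*((j:ℚ)+3) * Tq (j+2) k - 3*(2*(j:ℚ)+5)*((j:ℚ)+2) * Tq (j+1) k
      + ((j:ℚ)+1)*((j:ℚ)+3) * Tq j k = Psi j (k+1) - Psi j k := by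
  rcases lt_or_ge j k with hk | hkj
  · -- k ≥ j+1
    rcases (by omega : k = j+1 ∨ k = j+2 ∨ j+3 ≤ k) with rfl | rfl | hk3
    · have hj1 : ((j:ℚ)+1) ≠ 0 := by positivity
      have hj2 : ((j:ℚ)+2) ≠ 0 := by positivity
      have hf3 : (((j+3).factorial : ℕ) : ℚ) ≠ 0 := Nat.cast_ne_zero.mpr (Nat.factorial_ne_zero _)
      have hfj : ((j.factorial : ℕ) : ℚ) ≠ 0 := Nat.cast_ne_zero.mpr (Nat.factorial_ne_zero _)
      have c1 : (((j+5).choose (j+3)) : ℚ) = ((j:ℚ)+5)*((j:ℚ)+4)/2 := by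
        rw [show j+5 = (j+3)+2 from by omega, chq, fq2, Nat.factorial_two]
        push_cast
        field_simp
        ring
      have c2 : (((j+2).choose j) : ℚ) = ((j:ℚ)+2)*((j:ℚ)+1)/2 := by
        rw [show j+2 = j+2 from rfl, chq, fq2, Nat.factorial_two]
        push_cast
        field_simp
      simp only [Tq, Psi,
        show 2*(j+2)+2-(j+1) = j+5 from by omega,
        show j+2+1 = (j+2)+1 from rfl,
        show 2*(j+1)+2-(j+1) = (j+2)+1 from by omega,
        show j+1+1 = (j+1)+1 from rfl,
        show 2*j+3-(j+1) = j+2 from by omega,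
        show 2*j+3-(j+1+1) = (j)+1 from by omega]
      rw [c1, c2]
      simp only [Nat.choose_succ_self_right, Nat.choose_self, Nat.choose_succ_self,
        show (j+1)+1 = j+2 from rfl, Nat.choose_succ_self_right]
      push_cast
      field_simp
      ring
    · have hj1 : ((j:ℚ)+1) ≠ 0 := by positivity
      have hj2 : ((j:ℚ)+2) ≠ 0 := by positivity
      simp only [Tq, Psi,
        show 2*(j+2)+2-(j+2) = (j+3)+1 from by omega,
        show j+2+1 = (j+3) from by omega,
        show 2*j+3-(j+3) = j from by omega,
        show 2*j+3-(j+2) = (j)+1 from by omega,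
        show 2*(j+1)+2-(j+2) = j+2 from by omega,
        Nat.choose_succ_self_right, Nat.choose_self,
        Nat.choose_eq_zero_of_lt (by omega : j+1 < j+2),
        Nat.choose_eq_zero_of_lt (by omega : j < j+2),
        Nat.choose_eq_zero_of_lt (by omega : j+2 < j+3)]
      push_cast
      field_simp
      ring
    · -- all zero
      simp only [Tq, Psi]
      rw [Nat.choose_eq_zero_of_lt (by omega : j < k),
        Nat.choose_eq_zero_of_lt (by omega : j+1 < k),
        Nat.choose_eq_zero_of_lt (by omega : j+2 < k),
        Nat.choose_eq_zero_of_lt (by omega : j+2 < k+1)]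
      push_cast
      ring
  · obtain ⟨e, rfl⟩ := Nat.le.dest hkj
    simp only [Tq, Psi]
    have hF : (((k+2*e+2).factorial : ℕ) : ℚ) ≠ 0 := Nat.cast_ne_zero.mpr (Nat.factorial_ne_zero _)
    have hB : (((k+e).factorial : ℕ) : ℚ) ≠ 0 := Nat.cast_ne_zero.mpr (Nat.factorial_ne_zero _)
    have hC : ((e.factorial : ℕ) : ℚ) ≠ 0 := Nat.cast_ne_zero.mpr (Nat.factorial_ne_zero _)
    have hD : ((k.factorial : ℕ) : ℚ) ≠ 0 := Nat.cast_ne_zero.mpr (Nat.factorial_ne_zero _)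
    have n1 : ((k:ℚ)+(e:ℚ)+1) ≠ 0 := by positivity
    have n2 : ((k:ℚ)+(e:ℚ)+2) ≠ 0 := by positivity
    have n3 : ((k:ℚ)+(e:ℚ)+3) ≠ 0 := by positivity
    have n4 : ((e:ℚ)+1) ≠ 0 := by positivity
    have n5 : ((e:ℚ)+2) ≠ 0 := by positivity
    have n6 : ((e:ℚ)+3) ≠ 0 := by positivity
    have n7 : ((k:ℚ)+1) ≠ 0 := by positivity
    have hc1 : (((2*(k+e+2)+2-k).choose (k+e+2+1)) : ℚ)
        = ((k:ℚ)+2*e+6)*((k:ℚ)+2*e+5)*((k:ℚ)+2*e+4)*((k:ℚ)+2*e+3)*((k+2*e+2).factorial : ℚ)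
          / ((((k:ℚ)+e+3)*((k:ℚ)+e+2)*((k:ℚ)+e+1)*((k+e).factorial : ℚ))
            * (((e:ℚ)+3)*((e:ℚ)+2)*((e:ℚ)+1)*(e.factorial : ℚ))) := by
      rw [show 2*(k+e+2)+2-k = (k+e+3)+(e+3) from by omega,
        show k+e+2+1 = k+e+3 from by omega, chq,
        show (k+e+3)+(e+3) = (k+2*e+2)+4 from by omega, fq4 (k+2*e+2), fq3 (k+e), fq3 e]
      push_cast; ring
    have hc2 : (((k+e+2).choose k) : ℚ)
        = ((k:ℚ)+e+2)*((k:ℚ)+e+1)*((k+e).factorial : ℚ)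
          / ((k.factorial : ℚ) * (((e:ℚ)+2)*((e:ℚ)+1)*(e.factorial : ℚ))) := by
      rw [show k+e+2 = k+(e+2) from by omega, chq,
        show k+(e+2) = (k+e)+2 from by omega, fq2 (k+e), fq2 e]
      push_cast; ring
    have hc3 : (((2*(k+e+1)+2-k).choose (k+e+1+1)) : ℚ)
        = ((k:ℚ)+2*e+4)*((k:ℚ)+2*e+3)*((k+2*e+2).factorial : ℚ)
          / ((((k:ℚ)+e+2)*((k:ℚ)+e+1)*((k+e).factorial : ℚ))
            * (((e:ℚ)+2)*((e:ℚ)+1)*(e.factorial : ℚ))) := by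
      rw [show 2*(k+e+1)+2-k = (k+e+2)+(e+2) from by omega,
        show k+e+1+1 = k+e+2 from by omega, chq,
        show (k+e+2)+(e+2) = (k+2*e+2)+2 from by omega, fq2 (k+2*e+2), fq2 (k+e), fq2 e]
      push_cast; ring
    have hc4 : (((k+e+1).choose k) : ℚ)
        = ((k:ℚ)+e+1)*((k+e).factorial : ℚ)
          / ((k.factorial : ℚ) * (((e:ℚ)+1)*(e.factorial : ℚ))) := by
      rw [show k+e+1 = k+(e+1) from by omega, chq,
        show k+(e+1) = (k+e)+1 from by omega, fq1 (k+e), fq1 e]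
      push_cast; ring
    have hc5 : (((2*(k+e)+2-k).choose (k+e+1)) : ℚ)
        = ((k+2*e+2).factorial : ℚ)
          / ((((k:ℚ)+e+1)*((k+e).factorial : ℚ)) * (((e:ℚ)+1)*(e.factorial : ℚ))) := by
      rw [show 2*(k+e)+2-k = (k+e+1)+(e+1) from by omega, chq,
        show (k+e+1)+(e+1) = k+2*e+2 from by omega, fq1 (k+e), fq1 e]
      push_cast; ring
    have hc6 : (((k+e).choose k) : ℚ)
        = ((k+e).factorial : ℚ) / ((k.factorial : ℚ) * (e.factorial : ℚ)) := chq k e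
    have hc7 : (((2*(k+e)+3-(k+1)).choose (k+e)) : ℚ)
        = ((k+2*e+2).factorial : ℚ)
          / (((k+e).factorial : ℚ) * (((e:ℚ)+2)*((e:ℚ)+1)*(e.factorial : ℚ))) := by
      rw [show 2*(k+e)+3-(k+1) = (k+e)+(e+2) from by omega, chq,
        show (k+e)+(e+2) = k+2*e+2 from by omega, fq2 e]
    have hc8 : (((k+e+2).choose (k+1)) : ℚ)
        = ((k:ℚ)+e+2)*((k:ℚ)+e+1)*((k+e).factorial : ℚ)
          / ((((k:ℚ)+1)*(k.factorial : ℚ)) * (((e:ℚ)+1)*(e.factorial : ℚ))) := by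
      rw [show k+e+2 = (k+1)+(e+1) from by omega, chq,
        show (k+1)+(e+1) = (k+e)+2 from by omega, fq2 (k+e), fq1 k, fq1 e]
      push_cast; ring
    have hc9 : (((2*(k+e)+3-k).choose (k+e)) : ℚ)
        = ((k:ℚ)+2*e+3)*((k+2*e+2).factorial : ℚ)
          / (((k+e).factorial : ℚ) * (((e:ℚ)+3)*((e:ℚ)+2)*((e:ℚ)+1)*(e.factorial : ℚ))) := by
      rw [show 2*(k+e)+3-k = (k+e)+(e+3) from by omega, chq,
        show (k+e)+(e+3) = (k+2*e+2)+1 from by omega, fq1 (k+2*e+2), fq3 e]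
      push_cast; ring
    rw [hc1, hc2, hc3, hc4, hc5, hc6, hc7, hc8, hc9]
    set F := ((k+2*e+2).factorial : ℚ) with hFdef
    set B := ((k+e).factorial : ℚ) with hBdef
    set C := (e.factorial : ℚ) with hCdef
    set D := (k.factorial : ℚ) with hDdef
    push_cast
    field_simp
    ring

private lemma psi_zero (j : ℕ) : Psi j 0 = 0 := by
  simp [Psi]

private lemma psi_top (j : ℕ) : Psi j (j+4) = 0 := by
  simp [Psi, Nat.choose_eq_zero_of_lt (by omega : j+2 < j+4)]

private lemma sumkey (j : ℕ) :
    ((j:ℚ)+2)*((j:ℚ)+3) * ∑ k ∈ Finset.range (j+4), Tq (j+2) k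
      - 3*(2*(j:ℚ)+5)*((j:ℚ)+2) * ∑ k ∈ Finset.range (j+4), Tq (j+1) k
      + ((j:ℚ)+1)*((j:ℚ)+3) * ∑ k ∈ Finset.range (j+4), Tq j k = 0 := by
  have h : ∑ k ∈ Finset.range (j+4), (Psi j (k+1) - Psi j k) = 0 := by
    rw [Finset.sum_range_sub (Psi j), psi_zero, psi_top, sub_zero]
  rw [← h, ← Finset.sum_congr rfl (fun k _ => key_s3 j k)]
  rw [Finset.sum_add_distrib, Finset.sum_sub_distrib, ← Finset.mul_sum, ← Finset.mul_sum,
    ← Finset.mul_sum]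

private lemma ext (j N : ℕ) (h : j+1 ≤ N) :
    ∑ k ∈ Finset.range N, Tq j k = ∑ k ∈ Finset.range (j+1), Tq j k := by
  refine (Finset.sum_subset (Finset.range_subset_range.mpr h) ?_).symm
  intro k _ hk
  simp only [Finset.mem_range, not_lt] at hk
  simp [Tq, Nat.choose_eq_zero_of_lt (by omega : j < k)]

/-- The super-Catalan numbers `a(1) = 1`,
`a(n) = (1/n) · ∑_{k=0}^{n−2} C(2n−k−2, n−1)·C(n−2, k)` for `n > 1`,
satisfy `a(2) = 1` and the recurrence
`(n+1)·a(n+1) = 3·(2n−1)·a(n) − (n−2)·a(n−1)` for `n > 1`. -/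
theorem superCatalan_recurrence (a : ℕ → ℚ)
    (h1 : a 1 = 1)
    (h2 : ∀ n : ℕ, 1 < n → a n = (1 / (n : ℚ)) *
      ∑ k ∈ Finset.range (n - 1),
        (Nat.choose (2 * n - k - 2) (n - 1) : ℚ) * (Nat.choose (n - 2) k : ℚ)) :
    a 2 = 1 ∧ ∀ n : ℕ, 1 < n →
      ((n : ℚ) + 1) * a (n + 1) = 3 * (2 * (n : ℚ) - 1) * a n - ((n : ℚ) - 2) * a (n - 1) := by
  have ha2 : a 2 = 1 := by
    rw [h2 2 (by norm_num)]
    norm_num [Finset.sum_range_one]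
  refine ⟨ha2, ?_⟩
  intro n hn
  rcases (by omega : n = 2 ∨ 3 ≤ n) with rfl | h3
  · have ha3 : a 3 = 3 := by
      rw [h2 3 (by norm_num)]
      rw [show (3:ℕ)-1 = 2 from rfl]
      rw [Finset.sum_range_succ, Finset.sum_range_one]
      norm_num [Nat.choose]
    norm_num [ha2, ha3, h1]
  · obtain ⟨j, rfl⟩ : ∃ j, n = j + 3 := ⟨n - 3, by omega⟩
    simp only [show j+3-1 = j+2 from by omega]
    rw [h2 (j+3+1) (by omega), h2 (j+3) (by omega), h2 (j+2) (by omega)]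
    simp only [show ∀ k, 2*(j+3+1)-k-2 = 2*(j+2)+2-k from fun k => by omega,
      show j+3+1-1 = j+2+1 from by omega,
      show j+3+1-2 = j+2 from by omega,
      show ∀ k, 2*(j+3)-k-2 = 2*(j+1)+2-k from fun k => by omega,
      show j+3-1 = j+1+1 from by omega,
      show j+3-2 = j+1 from by omega,
      show ∀ k, 2*(j+2)-k-2 = 2*j+2-k from fun k => by omega,
      show j+2-1 = j+1 from by omega,
      show j+2-2 = j from by omega]
    have T2 : ∑ k ∈ Finset.range (j+2+1),
        ((Nat.choose (2*(j+2)+2-k) (j+2+1) : ℚ) * (Nat.choose (j+2) k : ℚ))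
        = ∑ k ∈ Finset.range (j+4), Tq (j+2) k := (ext (j+2) (j+4) (by omega)).symm
    have T1 : ∑ k ∈ Finset.range (j+1+1),
        ((Nat.choose (2*(j+1)+2-k) (j+1+1) : ℚ) * (Nat.choose (j+1) k : ℚ))
        = ∑ k ∈ Finset.range (j+4), Tq (j+1) k := (ext (j+1) (j+4) (by omega)).symm
    have T0 : ∑ k ∈ Finset.range (j+1),
        ((Nat.choose (2*j+2-k) (j+1) : ℚ) * (Nat.choose j k : ℚ))
        = ∑ k ∈ Finset.range (j+4), Tq j k := (ext j (j+4) (by omega)).symm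
    rw [T2, T1, T0]
    have hs := sumkey j
    have d2 : ((j:ℚ)+2) ≠ 0 := by positivity
    have d3 : ((j:ℚ)+3) ≠ 0 := by positivity
    have d4 : ((j:ℚ)+4) ≠ 0 := by positivity
    push_cast
    field_simp
    linear_combination hs
end
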